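/- arXiv:2311.06848 — 2 statements merged into one kernel-verified Lean document; each statement's English description precedes it below -/
import Mathlib

section
/- Let f : ℝ^n → ℝ be continuously differentiable, attain its minimum value f* at some point, and satisfy the Polyak–Łojasiewicz (PL) inequality with parameter μ > 0: (1/2)‖∇f(z)‖₂² ≥ μ(f(z) − f*) for all z ∈ ℝ^n. Let π : ℝ^n → ℝ^n be a map with f(π(z)) = f* and ‖∇f(z)‖₂ ≥ 2√μ·‖z − π(z)‖₂ for all z (a projection onto the optimal set satisfying the quadratic-growth consequence of the PL inequality). Let q > 1, ε ≥ 0, d̄ ≥ 0, σ > d̄ + ε/(2√μ) and ρ > ε/(2√μ). Suppose x : [0,∞) → ℝ^n is differentiable and x′(t) = −u(t) + d(t) for all t ≥ 0, where u, d : [0,∞) → ℝ^n satisfy ⟨u(t), ∇f(x(t))⟩ ≥ σ‖∇f(x(t))‖₂ + ρ‖∇f(x(t))‖₂^{1+q} and ‖d(t)‖₂ ≤ ε‖x(t) − π(x(t))‖₂ + d̄ for all t ≥ 0. Then f(x(t)) = f* for all t ≥ T, where T = 1/(μk₁) + 1/(μk₂(q−1)) with k₁ = σ − d̄ − ε/(2√μ)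 and k₂ = ρ − ε/(2√μ); the settling time is bounded uniformly in x(0) despite the disturbance. (Theorem 2.) -/
/-!
Along the trajectory put `W = 2μ (f ∘ x - f*)`. Cauchy–Schwarz, the quadratic-growth bound
`‖x - π x‖ ≤ ‖∇f‖ / (2√μ)` and `s² ≤ s + s^(1+q)` for `s = ‖∇f‖` absorb the disturbance into
the two terms of the protocol, so `W' ≤ -2μ (k₁ ‖∇f‖ + k₂ ‖∇f‖^(1+q))`, and the PL inequality
`W ≤ ‖∇f‖²` turns this into `W' ≤ -(2μk₁ √W + 2μk₂ W^((1+q)/2))`. For any such scalar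
inequality `W' ≤ -(α √W + β W^γ)` with `γ > 1`, the quantity `W^(1-γ)` grows at rate at least
`(γ-1)β`, so `W ≤ 1` after time `1/((γ-1)β)` whatever `W 0` is; from then on `√W` decreases at
rate at least `α/2` and vanishes within a further time `2/α`.
-/

open Set
open scoped RealInnerProductSpace

section FixedTime

variable {V V' : ℝ → ℝ} {a b : ℝ}

lemma image_sub_le_mul_sub_of_hasDerivAt_le {C : ℝ} (hab : a ≤ b)
    (hV : ∀ t ∈ Icc a b, HasDerivAt V (V' t) t) (hC : ∀ t ∈ Icc a b, V' t ≤ C) :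
    V b - V a ≤ C * (b - a) :=
  (convex_Icc a b).image_sub_le_mul_sub_of_deriv_le
    (fun t ht => (hV t ht).continuousAt.continuousWithinAt)
    (fun t ht => (hV t (interior_subset ht)).differentiableAt.differentiableWithinAt)
    (fun t ht => (hV t (interior_subset ht)).deriv ▸ hC t (interior_subset ht))
    a (left_mem_Icc.2 hab) b (right_mem_Icc.2 hab) hab

lemma mul_sub_le_image_sub_of_le_hasDerivAt {C : ℝ} (hab : a ≤ b)
    (hV : ∀ t ∈ Icc a b, HasDerivAt V (V' t) t) (hC : ∀ t ∈ Icc a b, C ≤ V' t) :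
    C * (b - a) ≤ V b - V a :=
  (convex_Icc a b).mul_sub_le_image_sub_of_le_deriv
    (fun t ht => (hV t ht).continuousAt.continuousWithinAt)
    (fun t ht => (hV t (interior_subset ht)).differentiableAt.differentiableWithinAt)
    (fun t ht => (hV t (interior_subset ht)).deriv ▸ hC t (interior_subset ht))
    a (left_mem_Icc.2 hab) b (right_mem_Icc.2 hab) hab

lemma rpow_one_sub_add_le_of_hasDerivAt_le {β γ : ℝ} (hγ : 1 ≤ γ) (hab : a ≤ b)
    (hV : ∀ t ∈ Icc a b, HasDerivAt V (V' t) t) (hpos : ∀ t ∈ Icc a b, 0 < V t)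
    (hV' : ∀ t ∈ Icc a b, V' t ≤ -(β * V t ^ γ)) :
    V a ^ (1 - γ) + (γ - 1) * β * (b - a) ≤ V b ^ (1 - γ) := by
  have hderiv : ∀ t ∈ Icc a b,
      HasDerivAt (fun s => V s ^ (1 - γ)) (V' t * (1 - γ) * V t ^ (-γ)) t := fun t ht => by
    simpa using (hV t ht).rpow_const (p := 1 - γ) (Or.inl (hpos t ht).ne')
  have hrate : ∀ t ∈ Icc a b, (γ - 1) * β ≤ V' t * (1 - γ) * V t ^ (-γ) := fun t ht => by
    have hcancel : V t ^ γ * V t ^ (-γ) = 1 := by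
      rw [← Real.rpow_add (hpos t ht), add_neg_cancel, Real.rpow_zero]
    calc (γ - 1) * β = -(β * V t ^ γ) * (1 - γ) * V t ^ (-γ) := by
          linear_combination -(γ - 1) * β * hcancel
      _ ≤ V' t * (1 - γ) * V t ^ (-γ) := by
          gcongr ?_ * _
          · exact (Real.rpow_pos_of_pos (hpos t ht) _).le
          exact mul_le_mul_of_nonpos_right (hV' t ht) (by linarith)
  linarith [mul_sub_le_image_sub_of_le_hasDerivAt hab hderiv hrate]

lemma sqrt_le_sqrt_sub_of_hasDerivAt_le {α : ℝ} (hab : a ≤ b)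
    (hV : ∀ t ∈ Icc a b, HasDerivAt V (V' t) t) (hpos : ∀ t ∈ Icc a b, 0 < V t)
    (hV' : ∀ t ∈ Icc a b, V' t ≤ -(α * √(V t))) :
    √(V b) ≤ √(V a) - α / 2 * (b - a) := by
  have hderiv : ∀ t ∈ Icc a b, HasDerivAt (fun s => √(V s)) (V' t / (2 * √(V t))) t :=
    fun t ht => (hV t ht).sqrt (hpos t ht).ne'
  have hrate : ∀ t ∈ Icc a b, V' t / (2 * √(V t)) ≤ -(α / 2) := fun t ht => by
    have hsqrt : 0 < √(V t) := Real.sqrt_pos.2 (hpos t ht)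
    rw [div_le_iff₀ (by positivity)]
    linarith [hV' t ht]
  linarith [image_sub_le_mul_sub_of_hasDerivAt_le hab hderiv hrate]

theorem eq_zero_of_hasDerivAt_le_neg_sqrt_sub_rpow {α β γ : ℝ} (hα : 0 < α) (hβ : 0 < β)
    (hγ : 1 < γ) (hV₀ : ∀ t ≥ 0, 0 ≤ V t) (hV : ∀ t ≥ 0, HasDerivAt V (V' t) t)
    (hV' : ∀ t ≥ 0, V' t ≤ -(α * √(V t) + β * V t ^ γ)) {t : ℝ}
    (ht : 1 / ((γ - 1) * β) + 2 / α ≤ t) : V t = 0 := by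
  set T₁ := 1 / ((γ - 1) * β) with hT₁
  set T₂ := 2 / α with hT₂
  have hγ₁ : 0 < γ - 1 := by linarith
  have hT₁_pos : 0 < T₁ := by positivity
  have hT₂_pos : 0 < T₂ := by positivity
  have hsqrt_term : ∀ s ≥ 0, V' s ≤ -(α * √(V s)) := fun s hs => by
    nlinarith [hV' s hs, Real.rpow_nonneg (hV₀ s hs) γ]
  have hrpow_term : ∀ s ≥ 0, V' s ≤ -(β * V s ^ γ) := fun s hs => by
    nlinarith [hV' s hs, Real.sqrt_nonneg (V s)]
  have hanti : AntitoneOn V (Ici 0) :=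
    antitoneOn_of_hasDerivWithinAt_nonpos (convex_Ici 0)
      (fun s hs => (hV s hs).continuousAt.continuousWithinAt)
      (fun s hs => (hV s (interior_subset hs)).hasDerivWithinAt)
      (fun s hs => by
        have hs' : s ≥ 0 := interior_subset hs
        nlinarith [hsqrt_term s hs', Real.sqrt_nonneg (V s)])
  suffices hT : V (T₁ + T₂) ≤ 0 by
    have := hanti (mem_Ici.2 (by positivity)) (mem_Ici.2 (by linarith)) ht
    linarith [hV₀ t (by linarith)]
  by_contra! hT
  have hpos : ∀ s ∈ Icc 0 (T₁ + T₂), 0 < V s := fun s hs =>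
    hT.trans_le (hanti hs.1 (mem_Ici.2 (by positivity)) hs.2)
  have hsub {c d : ℝ} (hc : 0 ≤ c) (hd : d ≤ T₁ + T₂) : Icc c d ⊆ Icc 0 (T₁ + T₂) :=
    Icc_subset_Icc hc hd
  have hV_T₁ : V T₁ < 1 := by
    have hgrow := rpow_one_sub_add_le_of_hasDerivAt_le hγ.le hT₁_pos.le
      (fun s hs => hV s (hsub le_rfl (by linarith) hs).1)
      (fun s hs => hpos s (hsub le_rfl (by linarith) hs))
      (fun s hs => hrpow_term s (hsub le_rfl (by linarith) hs).1)
    have hunit : (γ - 1) * β * (T₁ - 0) = 1 := by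
      rw [hT₁, sub_zero]; field_simp
    by_contra! h1
    have := Real.rpow_le_one_of_one_le_of_nonpos h1 (by linarith : 1 - γ ≤ 0)
    linarith [Real.rpow_pos_of_pos (hpos 0 (left_mem_Icc.2 (by positivity))) (1 - γ)]
  have hdecay := sqrt_le_sqrt_sub_of_hasDerivAt_le (le_add_of_nonneg_right hT₂_pos.le)
    (fun s hs => hV s (hsub hT₁_pos.le le_rfl hs).1)
    (fun s hs => hpos s (hsub hT₁_pos.le le_rfl hs))
    (fun s hs => hsqrt_term s (hsub hT₁_pos.le le_rfl hs).1)
  have hunit : α / 2 * (T₁ + T₂ - T₁) = 1 := by rw [hT₂]; field_simp; ring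
  have : √(V T₁) < 1 := (Real.sqrt_lt' one_pos).2 (by simpa using hV_T₁)
  linarith [Real.sqrt_nonneg (V (T₁ + T₂))]

end FixedTime

lemma sq_le_self_add_rpow_one_add {s q : ℝ} (hs : 0 ≤ s) (hq : 1 ≤ q) :
    s ^ 2 ≤ s + s ^ (1 + q) := by
  rcases le_or_gt s 1 with hs1 | hs1
  · nlinarith [Real.rpow_nonneg hs (1 + q)]
  · have : s ^ (2 : ℝ) ≤ s ^ (1 + q) := Real.rpow_le_rpow_of_exponent_le hs1.le (by linarith)
    rw [Real.rpow_two] at this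
    linarith

lemma rpow_div_two_le_rpow_of_le_sq {w s p : ℝ} (hw : 0 ≤ w) (hs : 0 ≤ s) (hp : 0 ≤ p)
    (h : w ≤ s ^ 2) : w ^ (p / 2) ≤ s ^ p :=
  calc w ^ (p / 2) ≤ (s ^ 2) ^ (p / 2) := Real.rpow_le_rpow hw h (by positivity)
    _ = s ^ p := by rw [← Real.rpow_two, ← Real.rpow_mul hs]; ring_nf

lemma inner_neg_add_le_of_norm_le {E : Type*} [NormedAddCommGroup E] [InnerProductSpace ℝ E]
    {g u d : E} {r κ q ε dbar σ ρ : ℝ} (hκ : 0 < κ) (hε : 0 ≤ ε) (hq : 1 ≤ q)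
    (hu : σ * ‖g‖ + ρ * ‖g‖ ^ (1 + q) ≤ ⟪u, g⟫) (hd : ‖d‖ ≤ ε * r + dbar)
    (hr : κ * r ≤ ‖g‖) :
    ⟪g, -u + d⟫ ≤ -((σ - dbar - ε / κ) * ‖g‖ + (ρ - ε / κ) * ‖g‖ ^ (1 + q)) := by
  have hd' : ‖d‖ ≤ ε / κ * ‖g‖ + dbar := by
    have : r ≤ ‖g‖ / κ := by rw [le_div_iff₀ hκ]; linarith
    calc ‖d‖ ≤ ε * (‖g‖ / κ) + dbar := hd.trans (by gcongr)
      _ = ε / κ * ‖g‖ + dbar := by ring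
  have hsq := mul_le_mul_of_nonneg_left (sq_le_self_add_rpow_one_add (norm_nonneg g) hq)
    (div_nonneg hε hκ.le)
  calc ⟪g, -u + d⟫ = ⟪g, d⟫ - ⟪u, g⟫ := by
        rw [inner_add_right, inner_neg_right, real_inner_comm]; ring
    _ ≤ ‖g‖ * (ε / κ * ‖g‖ + dbar) - (σ * ‖g‖ + ρ * ‖g‖ ^ (1 + q)) :=
        sub_le_sub ((real_inner_le_norm g d).trans (by gcongr)) hu
    _ ≤ -((σ - dbar - ε / κ) * ‖g‖ + (ρ - ε / κ) * ‖g‖ ^ (1 + q)) := by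
        linear_combination hsq

theorem robust_fxtgf_fixed_time_convergence_general
    {n : ℕ} (f : EuclideanSpace ℝ (Fin n) → ℝ) (fstar μ q ε dbar σ ρ : ℝ)
    (hf : ContDiff ℝ 1 f)
    (hlb : ∀ z, fstar ≤ f z)
    (hμ : 0 < μ)
    (hPL : ∀ z, μ * (f z - fstar) ≤ (1/2) * ‖gradient f z‖ ^ 2)
    (π : EuclideanSpace ℝ (Fin n) → EuclideanSpace ℝ (Fin n))
    (hQG : ∀ z, 2 * Real.sqrt μ * ‖z - π z‖ ≤ ‖gradient f z‖)
    (hq : 1 < q) (hε : 0 ≤ ε)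
    (hσ : dbar + ε / (2 * Real.sqrt μ) < σ)
    (hρ : ε / (2 * Real.sqrt μ) < ρ)
    (u d : ℝ → EuclideanSpace ℝ (Fin n))
    (x : ℝ → EuclideanSpace ℝ (Fin n))
    (hx : ∀ t ≥ (0:ℝ), HasDerivAt x (-(u t) + d t) t)
    (hu : ∀ t ≥ (0:ℝ),
      σ * ‖gradient f (x t)‖ + ρ * ‖gradient f (x t)‖ ^ (1 + q) ≤ ⟪u t, gradient f (x t)⟫)
    (hd : ∀ t ≥ (0:ℝ), ‖d t‖ ≤ ε * ‖x t - π (x t)‖ + dbar) :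
    ∀ t : ℝ,
      1 / (μ * (σ - dbar - ε / (2 * Real.sqrt μ))) +
        1 / (μ * (ρ - ε / (2 * Real.sqrt μ)) * (q - 1)) ≤ t →
      f (x t) = fstar := by
  intro t ht
  have hsqrtμ : 0 < √μ := Real.sqrt_pos.2 hμ
  set k₁ := σ - dbar - ε / (2 * √μ)
  set k₂ := ρ - ε / (2 * √μ)
  have he : 0 ≤ ε / (2 * √μ) := by positivity
  have hk₁ : 0 < k₁ := by linarith
  have hk₂ : 0 < k₂ := by linarith
  set W : ℝ → ℝ := fun s => 2 * μ * (f (x s) - fstar)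
  have hW_nonneg : ∀ s ≥ 0, 0 ≤ W s := fun s _ =>
    mul_nonneg (by positivity) (sub_nonneg.2 (hlb (x s)))
  have hW_le_sq : ∀ s, W s ≤ ‖gradient f (x s)‖ ^ 2 := fun s => by
    simp only [W]; linarith [hPL (x s)]
  have hW_deriv : ∀ s ≥ 0, HasDerivAt W (2 * μ * ⟪gradient f (x s), -u s + d s⟫) s :=
    fun s hs => by
      have hfx := (hf.differentiable one_ne_zero (x s)).hasGradientAt.hasFDerivAt
      simpa using ((hfx.comp_hasDerivAt s (hx s hs)).sub_const fstar).const_mul (2 * μ)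
  have hW_rate : ∀ s ≥ 0, 2 * μ * ⟪gradient f (x s), -u s + d s⟫ ≤
      -(2 * μ * k₁ * √(W s) + 2 * μ * k₂ * W s ^ ((1 + q) / 2)) := fun s hs => by
    have hinner := inner_neg_add_le_of_norm_le (by positivity) hε hq.le (hu s hs) (hd s hs)
      (hQG (x s))
    have hsqrt : √(W s) ≤ ‖gradient f (x s)‖ :=
      Real.sqrt_le_iff.2 ⟨norm_nonneg _, hW_le_sq s⟩
    have hrpow := rpow_div_two_le_rpow_of_le_sq (p := 1 + q) (hW_nonneg s hs) (norm_nonneg _)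
      (by linarith) (hW_le_sq s)
    have hsum : k₁ * √(W s) + k₂ * W s ^ ((1 + q) / 2) ≤
        k₁ * ‖gradient f (x s)‖ + k₂ * ‖gradient f (x s)‖ ^ (1 + q) := by gcongr
    nlinarith
  have hT : 1 / (((1 + q) / 2 - 1) * (2 * μ * k₂)) + 2 / (2 * μ * k₁) =
      1 / (μ * k₁) + 1 / (μ * k₂ * (q - 1)) := by
    have : q - 1 ≠ 0 := by linarith
    rw [show (1 + q) / 2 - 1 = (q - 1) / 2 by ring]
    field_simp
    ring
  have hWt := eq_zero_of_hasDerivAt_le_neg_sqrt_sub_rpow (by positivity) (by positivity)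
    (by linarith) hW_nonneg hW_deriv hW_rate (hT ▸ ht)
  simp only [W, mul_eq_zero, hμ.ne', false_or, OfNat.ofNat_ne_zero] at hWt
  linarith

/-- Theorem 2: fixed-time convergence of the robust FxT gradient flow with
both bounded and vanishing disturbances. -/
theorem robust_fxtgf_fixed_time_convergence
    {n : ℕ} (f : EuclideanSpace ℝ (Fin n) → ℝ) (fstar μ q ε dbar σ ρ : ℝ)
    (hf : ContDiff ℝ 1 f)
    (hmin : ∃ z, f z = fstar) (hlb : ∀ z, fstar ≤ f z)
    (hμ : 0 < μ)
    (hPL : ∀ z, μ * (f z - fstar) ≤ (1/2) * ‖gradient f z‖ ^ 2)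
    (π : EuclideanSpace ℝ (Fin n) → EuclideanSpace ℝ (Fin n))
    (hπ : ∀ z, f (π z) = fstar)
    (hQG : ∀ z, 2 * Real.sqrt μ * ‖z - π z‖ ≤ ‖gradient f z‖)
    (hq : 1 < q) (hε : 0 ≤ ε) (hdbar : 0 ≤ dbar)
    (hσ : dbar + ε / (2 * Real.sqrt μ) < σ)
    (hρ : ε / (2 * Real.sqrt μ) < ρ)
    (u d : ℝ → EuclideanSpace ℝ (Fin n))
    (x : ℝ → EuclideanSpace ℝ (Fin n))
    (hx : ∀ t ≥ (0:ℝ), HasDerivAt x (-(u t) + d t) t)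
    (hu : ∀ t ≥ (0:ℝ),
      σ * ‖gradient f (x t)‖ + ρ * ‖gradient f (x t)‖ ^ (1 + q) ≤ ⟪u t, gradient f (x t)⟫)
    (hd : ∀ t ≥ (0:ℝ), ‖d t‖ ≤ ε * ‖x t - π (x t)‖ + dbar) :
    ∀ t : ℝ,
      1 / (μ * (σ - dbar - ε / (2 * Real.sqrt μ))) +
        1 / (μ * (ρ - ε / (2 * Real.sqrt μ)) * (q - 1)) ≤ t →
      f (x t) = fstar :=
  robust_fxtgf_fixed_time_convergence_general f fstar μ q ε dbar σ ρ hf hlb hμ hPL π hQG hq hε hσ hρ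
    u d x hx hu hd
end

section
/- Let A ∈ ℝ^{m×n} and b ∈ ℝ^m with {z ∈ ℝ^n : Az = b} nonempty, let f : ℝ^n → ℝ be continuously differentiable and μ-strongly convex (μ > 0), and set f* = min{f(z) : Az = b}. Let P ∈ ℝ^{n×n} satisfy range(P) = null(A) (equality of subspaces of ℝ^n), and let λ > 0 be such that every nonzero eigenvalue of PᵀP is at least λ. Let σ, ρ > 0, p ∈ [0,1), q > 1, and let g : ℝ^n → ℝ^n satisfy ⟨g(y), y⟩ ≥ σ‖y‖₂^{1+p} + ρ‖y‖₂^{1+q} for all y ∈ ℝ^n. If x : [0,∞) → ℝ^n is differentiable with A·x(0) = b and x′(t) = −P·g(Pᵀ∇f(x(t))) for all t ≥ 0, then A·x(t) = b for all t ≥ 0, and f(x(t)) = f* for all t ≥ T, where T = (1/(μλ))·(1/(σ(1−p)) + 1/(ρ(q−1))). (Proposition 5.) -/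
/-!
Since `P` maps into `null(A)`, `A x(t)` is constant. With `y = Pᵀ∇f(x)`, the gap
`V = f ∘ x - f*` has `V' = -⟪g y, y⟫`. Writing the gap to a minimiser as `P u` with
`u ⊥ ker P`, strong convexity and `λ‖u‖² ≤ ‖P u‖²` give the Polyak–Łojasiewicz inequality
`2μλ V ≤ ‖y‖²`, so `W = 2μλ V` obeys `W' ≤ -(a W^α + b W^β)` with `α = (1+p)/2 < 1 < β = (1+q)/2`.
Then `W^(1-β)` grows at rate `b(β-1)`, forcing `W ≤ 1` by time `1/(b(β-1))`, after which
`W^(1-α)` falls at rate `a(1-α)` and reaches `0` within a further `1/(a(1-α))`.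
-/

open scoped RealInnerProductSpace

open Set ContinuousLinearMap

theorem apply_eq_apply_zero_of_hasDerivAt_mem_ker
    {E F : Type*} [NormedAddCommGroup E] [NormedSpace ℝ E]
    [NormedAddCommGroup F] [NormedSpace ℝ F]
    (L : E →L[ℝ] F) {x x' : ℝ → E} (hx : ∀ t ≥ (0 : ℝ), HasDerivAt x (x' t) t)
    (hL : ∀ t ≥ (0 : ℝ), L (x' t) = 0) {t : ℝ} (ht : 0 ≤ t) : L (x t) = L (x 0) := by
  have hLx : ∀ s ≥ (0 : ℝ), HasDerivAt (fun s => L (x s)) 0 s := fun s hs => by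
    have h := L.hasFDerivAt.comp_hasDerivAt s (hx s hs)
    rwa [hL s hs] at h
  refine constant_of_has_deriv_right_zero (f := fun s => L (x s)) (fun s hs => ?_)
    (fun s hs => ?_) t ⟨ht, le_rfl⟩
  · exact (hLx s hs.1).continuousAt.continuousWithinAt
  · exact (hLx s hs.1).hasDerivWithinAt

theorem HasGradientAt.comp_hasDerivAt
    {E : Type*} [NormedAddCommGroup E] [InnerProductSpace ℝ E] [CompleteSpace E]
    {f : E → ℝ} {f' : E} {x : ℝ → E} {x' : E} {t : ℝ}
    (hf : HasGradientAt f f' (x t)) (hx : HasDerivAt x x' t) :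
    HasDerivAt (fun s => f (x s)) ⟪f', x'⟫ t := by
  have h := hf.hasFDerivAt.comp_hasDerivAt t hx
  rwa [InnerProductSpace.toDual_apply_apply] at h

theorem lam_mul_norm_sq_le_norm_apply_sq_of_mem_orthogonal_ker
    {E F : Type*} [NormedAddCommGroup E] [InnerProductSpace ℝ E] [FiniteDimensional ℝ E]
    [NormedAddCommGroup F] [InnerProductSpace ℝ F] [CompleteSpace F]
    (T : E →L[ℝ] F) {lam : ℝ}
    (heig : ∀ (c : ℝ) (v : E), v ≠ 0 → c ≠ 0 → (adjoint T ∘L T) v = c • v → lam ≤ c)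
    {v : E} (hv : v ∈ T.kerᗮ) : lam * ‖v‖ ^ 2 ≤ ‖T v‖ ^ 2 := by
  set M := adjoint T ∘L T
  have hM : (M : E →ₗ[ℝ] E).IsSymmetric := fun a c => by
    simp [M, adjoint_inner_left, adjoint_inner_right]
  set B := hM.eigenvectorBasis rfl
  set c := hM.eigenvalues rfl
  have hMB : ∀ i, M (B i) = c i • B i := fun i => by
    simpa only [RCLike.ofReal_real_eq_id, id, coe_coe] using hM.apply_eigenvectorBasis rfl i
  have hTB : ∀ i, ‖T (B i)‖ ^ 2 = c i := fun i => by
    rw [← real_inner_self_eq_norm_sq, ← adjoint_inner_left, ← comp_apply, hMB,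
      real_inner_smul_left, real_inner_self_eq_norm_sq, B.orthonormal.1 i, one_pow, mul_one]
  have hcoord : ∀ i, lam * ⟪B i, v⟫ ^ 2 ≤ c i * ⟪B i, v⟫ ^ 2 := fun i => by
    by_cases hci : c i = 0
    · have hBker : B i ∈ T.ker := by simpa [hci] using hTB i
      simp [Submodule.inner_right_of_mem_orthogonal hBker hv]
    · exact mul_le_mul_of_nonneg_right (heig _ _ (B.orthonormal.ne_zero i) hci (hMB i))
        (sq_nonneg _)
  have hv_sq : ‖v‖ ^ 2 = ∑ i, ⟪B i, v⟫ ^ 2 := by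
    simp [← B.sum_sq_norm_inner_right v]
  have hTv_sq : ‖T v‖ ^ 2 = ∑ i, c i * ⟪B i, v⟫ ^ 2 := by
    rw [← real_inner_self_eq_norm_sq, ← adjoint_inner_left, ← comp_apply,
      ← B.sum_inner_mul_inner]
    refine Finset.sum_congr rfl fun i _ => ?_
    rw [← coe_coe, hM, coe_coe, hMB, real_inner_smul_right, real_inner_comm]
    ring
  rw [hv_sq, hTv_sq, Finset.mul_sum]
  exact Finset.sum_le_sum fun i _ => hcoord i

theorem two_mul_mul_sub_le_norm_adjoint_gradient_sq
    {E F : Type*} [NormedAddCommGroup E] [InnerProductSpace ℝ E] [CompleteSpace E]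
    [NormedAddCommGroup F] [InnerProductSpace ℝ F] [FiniteDimensional ℝ F]
    {f : E → ℝ} {μ : ℝ} (hμ : 0 < μ)
    (hsc : ∀ z w, f z + ⟪gradient f z, w - z⟫ + μ / 2 * ‖w - z‖ ^ 2 ≤ f w)
    (T : F →L[ℝ] E) {lam : ℝ} (hlam : 0 < lam)
    (heig : ∀ (c : ℝ) (v : F), v ≠ 0 → c ≠ 0 → (adjoint T ∘L T) v = c • v → lam ≤ c)
    {x z : E} {u : F} (hu : T u = z - x) :
    2 * μ * lam * (f x - f z) ≤ ‖adjoint T (gradient f x)‖ ^ 2 := by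
  obtain ⟨u₀, hu₀, u₁, hu₁, rfl⟩ := T.ker.exists_add_mem_mem_orthogonal u
  set y := adjoint T (gradient f x)
  have hTu : T u₁ = z - x := by simpa [show T u₀ = 0 from hu₀] using hu
  have hsc' := hsc x z
  rw [← hTu, ← adjoint_inner_left] at hsc'
  have hspec := lam_mul_norm_sq_le_norm_apply_sq_of_mem_orthogonal_ker T heig hu₁
  have hcs : -⟪y, u₁⟫ ≤ ‖y‖ * ‖u₁‖ := (neg_le_abs _).trans (abs_real_inner_le_norm y u₁)
  have hgap : f x - f z ≤ ‖y‖ * ‖u₁‖ - μ * lam / 2 * ‖u₁‖ ^ 2 := by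
    nlinarith [mul_le_mul_of_nonneg_left hspec hμ.le]
  nlinarith [mul_le_mul_of_nonneg_left hgap (by positivity : 0 ≤ 2 * μ * lam),
    sq_nonneg (‖y‖ - μ * lam * ‖u₁‖)]

theorem mul_sub_le_rpow_sub_div_of_hasDerivAt_le
    {W W' : ℝ → ℝ} {k γ t₀ t₁ : ℝ} (hγ : γ ≠ 1) (ht : t₀ ≤ t₁)
    (hpos : ∀ t ∈ Icc t₀ t₁, 0 < W t) (hW : ∀ t ∈ Icc t₀ t₁, HasDerivAt W (W' t) t)
    (hW' : ∀ t ∈ Icc t₀ t₁, W' t ≤ -(k * W t ^ γ)) :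
    k * (t₁ - t₀) ≤ (W t₀ ^ (1 - γ) - W t₁ ^ (1 - γ)) / (1 - γ) := by
  have hγ' : 1 - γ ≠ 0 := sub_ne_zero.2 (Ne.symm hγ)
  set Φ : ℝ → ℝ := fun t => W t ^ (1 - γ) / (1 - γ) + k * t
  have hΦ : ∀ t ∈ Icc t₀ t₁, HasDerivAt Φ (W' t * W t ^ (-γ) + k) t := fun t htI => by
    have h := ((hW t htI).rpow_const (p := 1 - γ) (Or.inl (hpos t htI).ne')).div_const (1 - γ)
    refine (h.add ((hasDerivAt_id t).const_mul k)).congr_deriv ?_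
    rw [show 1 - γ - 1 = -γ by ring]
    field_simp
  have hΦ' : ∀ t ∈ Icc t₀ t₁, W' t * W t ^ (-γ) + k ≤ 0 := fun t htI => by
    have hWpos := hpos t htI
    have h := mul_le_mul_of_nonneg_right (hW' t htI) (Real.rpow_nonneg hWpos.le (-γ))
    rw [neg_mul, mul_assoc, ← Real.rpow_add hWpos, add_neg_cancel, Real.rpow_zero,
      mul_one] at h
    linarith
  have hanti : AntitoneOn Φ (Icc t₀ t₁) :=
    antitoneOn_of_hasDerivWithinAt_nonpos (convex_Icc t₀ t₁)
      (fun t htI => (hΦ t htI).continuousAt.continuousWithinAt)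
      (fun t htI => (hΦ t (interior_subset htI)).hasDerivWithinAt)
      (fun t htI => hΦ' t (interior_subset htI))
  have h := hanti (left_mem_Icc.2 ht) (right_mem_Icc.2 ht) ht
  simp only [Φ] at h
  rw [sub_div]
  linarith

theorem eq_zero_of_hasDerivAt_le_neg_rpow_add_rpow
    {W W' : ℝ → ℝ} {a b α β : ℝ} (ha : 0 < a) (hb : 0 < b) (hα : α < 1) (hβ : 1 < β)
    (hW0 : ∀ t ≥ (0 : ℝ), 0 ≤ W t) (hW : ∀ t ≥ (0 : ℝ), HasDerivAt W (W' t) t)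
    (hW' : ∀ t ≥ (0 : ℝ), W' t ≤ -(a * W t ^ α + b * W t ^ β))
    {t : ℝ} (ht : 1 / (a * (1 - α)) + 1 / (b * (β - 1)) ≤ t) : W t = 0 := by
  set T₁ := 1 / (b * (β - 1))
  set T₂ := 1 / (a * (1 - α))
  have hβ₁ : 0 < β - 1 := by linarith
  have hα₁ : 0 < 1 - α := by linarith
  have hT₁ : 0 < T₁ := by positivity
  have hT₂ : 0 < T₂ := by positivity
  have hanti : AntitoneOn W (Ici 0) :=
    antitoneOn_of_hasDerivWithinAt_nonpos (convex_Ici 0)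
      (fun s hs => (hW s hs).continuousAt.continuousWithinAt)
      (fun s hs => (hW s (interior_subset hs)).hasDerivWithinAt)
      (fun s hs => (hW' s (interior_subset hs)).trans <| neg_nonpos.2 <| by
        have := hW0 s (interior_subset hs)
        positivity)
  have hpos : ∀ {s₀ s₁}, 0 ≤ s₀ → 0 < W s₁ → ∀ s ∈ Icc s₀ s₁, 0 < W s := fun hs₀ h s hs =>
    h.trans_le (hanti (hs₀.trans hs.1) (hs₀.trans (hs.1.trans hs.2)) hs.2)
  have hWT₁ : W T₁ ≤ 1 := by
    by_contra! h
    have h1 := mul_sub_le_rpow_sub_div_of_hasDerivAt_le (k := b) hβ.ne' hT₁.le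
      (hpos le_rfl (zero_lt_one.trans h)) (fun s hs => hW s hs.1) fun s hs => by
        have := hW0 s hs.1
        linarith [hW' s hs.1, mul_nonneg ha.le (Real.rpow_nonneg this α)]
    rw [le_div_iff_of_neg (by linarith), show b * (T₁ - 0) * (1 - β) = -1 by
      simp only [T₁]; field_simp; ring] at h1
    linarith [Real.rpow_lt_one_of_one_lt_of_neg h (by linarith : 1 - β < 0),
      Real.rpow_nonneg (hW0 0 le_rfl) (1 - β)]
  have hWT : W (T₁ + T₂) = 0 := by
    by_contra! h
    have h0 := (hW0 _ (by positivity)).lt_of_ne h.symm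
    have h1 := mul_sub_le_rpow_sub_div_of_hasDerivAt_le (k := a) hα.ne (by linarith : T₁ ≤ T₁ + T₂)
      (hpos hT₁.le h0) (fun s hs => hW s (hT₁.le.trans hs.1)) fun s hs => by
        have := hW0 s (hT₁.le.trans hs.1)
        linarith [hW' s (hT₁.le.trans hs.1), mul_nonneg hb.le (Real.rpow_nonneg this β)]
    rw [le_div_iff₀ (by linarith), show a * (T₁ + T₂ - T₁) * (1 - α) = 1 by
      simp only [T₂]; field_simp; ring] at h1
    linarith [Real.rpow_le_one (hW0 T₁ hT₁.le) hWT₁ (by linarith : 0 ≤ 1 - α),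
      Real.rpow_pos_of_pos h0 (1 - α)]
  have ht₀ : 0 ≤ T₁ + T₂ := by positivity
  exact le_antisymm (hWT ▸ hanti ht₀ (ht₀.trans (by linarith)) (by linarith))
    (hW0 t (ht₀.trans (by linarith)))

theorem rpow_div_two_le_rpow_of_le_sq_s12 {c r e : ℝ} (hc : 0 ≤ c) (hr : 0 ≤ r) (he : 0 ≤ e)
    (h : c ≤ r ^ 2) : c ^ (e / 2) ≤ r ^ e := by
  calc c ^ (e / 2) ≤ (r ^ 2) ^ (e / 2) := Real.rpow_le_rpow hc h (by positivity)
    _ = r ^ e := by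
      rw [← Real.rpow_natCast r 2, ← Real.rpow_mul hr, Nat.cast_ofNat,
        mul_div_cancel₀ e two_ne_zero]

theorem eq_zero_of_hasDerivAt_le_of_mul_le_sq
    {V V' r : ℝ → ℝ} {c σ ρ p q : ℝ} (hc : 0 < c) (hσ : 0 < σ) (hρ : 0 < ρ)
    (hp₀ : -1 ≤ p) (hp₁ : p < 1) (hq : 1 < q)
    (hV0 : ∀ t ≥ (0 : ℝ), 0 ≤ V t) (hV : ∀ t ≥ (0 : ℝ), HasDerivAt V (V' t) t)
    (hV' : ∀ t ≥ (0 : ℝ), V' t ≤ -(σ * r t ^ (1 + p) + ρ * r t ^ (1 + q)))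
    (hr : ∀ t ≥ (0 : ℝ), 0 ≤ r t) (hPL : ∀ t ≥ (0 : ℝ), c * V t ≤ r t ^ 2)
    {t : ℝ} (ht : 2 / c * (1 / (σ * (1 - p)) + 1 / (ρ * (q - 1))) ≤ t) : V t = 0 := by
  have hcV : ∀ s ≥ (0 : ℝ), 0 ≤ c * V s := fun s hs => mul_nonneg hc.le (hV0 s hs)
  have hdecay : ∀ s ≥ (0 : ℝ), c * V' s ≤
      -(c * σ * (c * V s) ^ ((1 + p) / 2) + c * ρ * (c * V s) ^ ((1 + q) / 2)) := fun s hs => by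
    have h₁ := rpow_div_two_le_rpow_of_le_sq_s12 (e := 1 + p) (hcV s hs) (hr s hs) (by linarith)
      (hPL s hs)
    have h₂ := rpow_div_two_le_rpow_of_le_sq_s12 (e := 1 + q) (hcV s hs) (hr s hs) (by linarith)
      (hPL s hs)
    nlinarith [mul_le_mul_of_nonneg_left h₁ hσ.le, mul_le_mul_of_nonneg_left h₂ hρ.le, hV' s hs]
  refine (mul_eq_zero.1 (eq_zero_of_hasDerivAt_le_neg_rpow_add_rpow (W := fun s => c * V s)
    (by positivity) (by positivity) (by linarith) (by linarith) hcV
    (fun s hs => (hV s hs).const_mul c) hdecay (ht.trans' (le_of_eq ?_)))).resolve_left hc.ne'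
  have : 0 < 1 - p := by linarith
  have : 0 < q - 1 := by linarith
  rw [show 1 - (1 + p) / 2 = (1 - p) / 2 by ring, show (1 + q) / 2 - 1 = (q - 1) / 2 by ring]
  field_simp

theorem projected_fxtgf_fixed_time_convergence_general
    {n m : ℕ}
    (A : EuclideanSpace ℝ (Fin n) →L[ℝ] EuclideanSpace ℝ (Fin m))
    (b : EuclideanSpace ℝ (Fin m))
    (f : EuclideanSpace ℝ (Fin n) → ℝ) (μ : ℝ) (hμ : 0 < μ)
    (hf : ContDiff ℝ 1 f)
    (hsc : ∀ z w, f z + ⟪gradient f z, w - z⟫ + μ / 2 * ‖w - z‖ ^ 2 ≤ f w)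
    (fstar : ℝ) (hatt : ∃ z, A z = b ∧ f z = fstar)
    (hlb : ∀ z, A z = b → fstar ≤ f z)
    (P : EuclideanSpace ℝ (Fin n) →L[ℝ] EuclideanSpace ℝ (Fin n))
    (hP : LinearMap.range (P : EuclideanSpace ℝ (Fin n) →ₗ[ℝ] EuclideanSpace ℝ (Fin n)) = LinearMap.ker (A : EuclideanSpace ℝ (Fin n) →ₗ[ℝ] EuclideanSpace ℝ (Fin m)))
    (lam : ℝ) (hlam : 0 < lam)
    (heig : ∀ (c : ℝ) (v : EuclideanSpace ℝ (Fin n)), v ≠ 0 → c ≠ 0 →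
      (ContinuousLinearMap.adjoint P ∘L P) v = c • v → lam ≤ c)
    (σ ρ p q : ℝ) (hσ : 0 < σ) (hρ : 0 < ρ) (hp : p ∈ Set.Ico (0:ℝ) 1) (hq : 1 < q)
    (g : EuclideanSpace ℝ (Fin n) → EuclideanSpace ℝ (Fin n))
    (hg : ∀ y, σ * ‖y‖ ^ (1 + p) + ρ * ‖y‖ ^ (1 + q) ≤ ⟪g y, y⟫)
    (x : ℝ → EuclideanSpace ℝ (Fin n)) (hx0 : A (x 0) = b)
    (hx : ∀ t ≥ (0:ℝ),
      HasDerivAt x (-(P (g (ContinuousLinearMap.adjoint P (gradient f (x t)))))) t) :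
    (∀ t ≥ (0:ℝ), A (x t) = b) ∧
    (∀ t : ℝ, (1 / (μ * lam)) * (1 / (σ * (1 - p)) + 1 / (ρ * (q - 1))) ≤ t →
      f (x t) = fstar) := by
  have hAP : ∀ v, A (P v) = 0 := LinearMap.congr_fun (LinearMap.range_le_ker_iff.1 hP.le)
  have hfeas : ∀ t ≥ (0:ℝ), A (x t) = b := fun t ht =>
    (apply_eq_apply_zero_of_hasDerivAt_mem_ker A hx (fun s _ => by simp [hAP]) ht).trans hx0
  refine ⟨hfeas, fun t ht => ?_⟩
  obtain ⟨z, hzA, rfl⟩ := hatt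
  set y := fun s => adjoint P (gradient f (x s))
  have hV : ∀ s ≥ (0:ℝ), HasDerivAt (fun s => f (x s) - f z) (-⟪g (y s), y s⟫) s :=
    fun s hs => by
      have h := ((hf.differentiable one_ne_zero (x s)).hasGradientAt.comp_hasDerivAt
        (hx s hs)).sub_const (f z)
      rwa [inner_neg_right, ← adjoint_inner_left, real_inner_comm] at h
  have hPL : ∀ s ≥ (0:ℝ), 2 * μ * lam * (f (x s) - f z) ≤ ‖y s‖ ^ 2 := fun s hs => by
    have hgap : A (z - x s) = 0 := by simp [hzA, hfeas s hs]
    obtain ⟨u, hu⟩ := hP.ge hgap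
    exact two_mul_mul_sub_le_norm_adjoint_gradient_sq hμ hsc P hlam heig hu
  refine sub_eq_zero.1 (eq_zero_of_hasDerivAt_le_of_mul_le_sq (by positivity) hσ hρ
    (by linarith [hp.1]) hp.2 hq (fun s hs => sub_nonneg.2 (hlb _ (hfeas s hs))) hV
    (fun s _ => neg_le_neg (hg (y s))) (fun s _ => norm_nonneg _) hPL (ht.trans' (le_of_eq ?_)))
  congr 1
  field_simp

/-- Proposition 5: the projected FxT gradient flow keeps the affine feasible set
invariant and reaches the constrained minimum in fixed time. -/
theorem projected_fxtgf_fixed_time_convergence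
    {n m : ℕ}
    (A : EuclideanSpace ℝ (Fin n) →L[ℝ] EuclideanSpace ℝ (Fin m))
    (b : EuclideanSpace ℝ (Fin m)) (hfeas : ∃ z, A z = b)
    (f : EuclideanSpace ℝ (Fin n) → ℝ) (μ : ℝ) (hμ : 0 < μ)
    (hf : ContDiff ℝ 1 f)
    (hsc : ∀ z w, f z + ⟪gradient f z, w - z⟫ + μ / 2 * ‖w - z‖ ^ 2 ≤ f w)
    (fstar : ℝ) (hatt : ∃ z, A z = b ∧ f z = fstar)
    (hlb : ∀ z, A z = b → fstar ≤ f z)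
    (P : EuclideanSpace ℝ (Fin n) →L[ℝ] EuclideanSpace ℝ (Fin n))
    (hP : LinearMap.range (P : EuclideanSpace ℝ (Fin n) →ₗ[ℝ] EuclideanSpace ℝ (Fin n)) = LinearMap.ker (A : EuclideanSpace ℝ (Fin n) →ₗ[ℝ] EuclideanSpace ℝ (Fin m)))
    (lam : ℝ) (hlam : 0 < lam)
    (heig : ∀ (c : ℝ) (v : EuclideanSpace ℝ (Fin n)), v ≠ 0 → c ≠ 0 →
      (ContinuousLinearMap.adjoint P ∘L P) v = c • v → lam ≤ c)
    (σ ρ p q : ℝ) (hσ : 0 < σ) (hρ : 0 < ρ) (hp : p ∈ Set.Ico (0:ℝ) 1) (hq : 1 < q)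
    (g : EuclideanSpace ℝ (Fin n) → EuclideanSpace ℝ (Fin n))
    (hg : ∀ y, σ * ‖y‖ ^ (1 + p) + ρ * ‖y‖ ^ (1 + q) ≤ ⟪g y, y⟫)
    (x : ℝ → EuclideanSpace ℝ (Fin n)) (hx0 : A (x 0) = b)
    (hx : ∀ t ≥ (0:ℝ),
      HasDerivAt x (-(P (g (ContinuousLinearMap.adjoint P (gradient f (x t)))))) t) :
    (∀ t ≥ (0:ℝ), A (x t) = b) ∧
    (∀ t : ℝ, (1 / (μ * lam)) * (1 / (σ * (1 - p)) + 1 / (ρ * (q - 1))) ≤ t →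
      f (x t) = fstar) :=
  projected_fxtgf_fixed_time_convergence_general A b f μ hμ hf hsc fstar hatt hlb P hP lam hlam heig
    σ ρ p q hσ hρ hp hq g hg x hx0 hx
end
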